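/- On ℝⁿ \ {0}, the vector field x ↦ ‖x‖^{4−2n}·dφₓ applied componentwise to the inversion φ(x) = x/‖x‖² is divergence-free: for each component i, div(‖x‖^{4−2n} ∇φᵢ)(x) = 0, where φᵢ(x) = xᵢ/‖x‖². Hence the inversion is p(·)-harmonic for the weight ‖x‖^{4−2n}. -/

import Mathlib

/-!
Away from the origin, `‖y‖ ^ a • ∇φᵢ(y) = ‖y‖ ^ (a - 2) • eᵢ - (2 yᵢ ‖y‖ ^ (a - 4)) • y`.
The divergence of `g • eᵢ` is `∂ᵢ g` and that of `h • y` is `n h + ⟨∇h, y⟩`, so a direct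
computation gives `div (‖·‖ ^ a ∇φᵢ)(x) = (4 - a - 2n) xᵢ ‖x‖ ^ (a - 4)`, which vanishes
exactly for the weight exponent `a = 4 - 2n`.
-/

open InnerProductSpace Real

theorem hasFDerivAt_norm_rpow_of_ne_zero {E : Type*} [NormedAddCommGroup E]
    [InnerProductSpace ℝ E] {x : E} (hx : x ≠ 0) (p : ℝ) :
    HasFDerivAt (fun y : E ↦ ‖y‖ ^ p) ((p * ‖x‖ ^ (p - 2)) • innerSL ℝ x) x := by
  apply HasStrictFDerivAt.hasFDerivAt
  convert! (hasStrictFDerivAt_norm_sq x).rpow_const (p := p / 2) (by simp [hx]) using 0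
  simp_rw [← Real.rpow_natCast_mul (norm_nonneg _), ← Nat.cast_smul_eq_nsmul ℝ, smul_smul]
  ring_nf

section

variable {ι : Type*} [Fintype ι] [DecidableEq ι]

noncomputable def divergence (F : EuclideanSpace ℝ ι → EuclideanSpace ℝ ι)
    (x : EuclideanSpace ℝ ι) : ℝ :=
  ∑ j, fderiv ℝ F x (EuclideanSpace.single j 1) j

theorem HasFDerivAt.divergence_eq_trace {F : EuclideanSpace ℝ ι → EuclideanSpace ℝ ι}
    {F' : EuclideanSpace ℝ ι →L[ℝ] EuclideanSpace ℝ ι} {x : EuclideanSpace ℝ ι}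
    (hF : HasFDerivAt F F' x) :
    divergence F x = LinearMap.trace ℝ _ (F' : EuclideanSpace ℝ ι →ₗ[ℝ] EuclideanSpace ℝ ι) := by
  rw [divergence, hF.fderiv, LinearMap.trace_eq_sum_inner _ (EuclideanSpace.basisFun ι ℝ)]
  simp [EuclideanSpace.inner_single_left]

theorem divergence_congr_of_eventuallyEq {F G : EuclideanSpace ℝ ι → EuclideanSpace ℝ ι}
    {x : EuclideanSpace ℝ ι} (h : F =ᶠ[nhds x] G) : divergence F x = divergence G x := by
  rw [divergence, divergence, h.fderiv_eq]

theorem divergence_sub {F G : EuclideanSpace ℝ ι → EuclideanSpace ℝ ι} {x : EuclideanSpace ℝ ι}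
    (hF : DifferentiableAt ℝ F x) (hG : DifferentiableAt ℝ G x) :
    divergence (fun y => F y - G y) x = divergence F x - divergence G x := by
  rw [(hF.hasFDerivAt.fun_sub hG.hasFDerivAt).divergence_eq_trace,
    hF.hasFDerivAt.divergence_eq_trace, hG.hasFDerivAt.divergence_eq_trace,
    ContinuousLinearMap.toLinearMap_sub, map_sub]

theorem HasFDerivAt.divergence_smul_const {f : EuclideanSpace ℝ ι → ℝ}
    {f' : EuclideanSpace ℝ ι →L[ℝ] ℝ} {x : EuclideanSpace ℝ ι} (hf : HasFDerivAt f f' x)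
    (v : EuclideanSpace ℝ ι) :
    divergence (fun y => f y • v) x = f' v := by
  rw [(hf.smul_const v).divergence_eq_trace]
  simp only [ContinuousLinearMap.coe_smulRight, LinearMap.trace_smulRight,
    ContinuousLinearMap.coe_coe]

theorem HasFDerivAt.divergence_smul_id {f : EuclideanSpace ℝ ι → ℝ}
    {f' : EuclideanSpace ℝ ι →L[ℝ] ℝ} {x : EuclideanSpace ℝ ι} (hf : HasFDerivAt f f' x) :
    divergence (fun y => f y • y) x = Fintype.card ι * f x + f' x := by
  have hfy : HasFDerivAt (fun y => f y • y) _ x := hf.fun_smul (hasFDerivAt_id x)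
  rw [hfy.divergence_eq_trace]
  simp only [ContinuousLinearMap.toLinearMap_add, ContinuousLinearMap.toLinearMap_smul, map_add,
    map_smul, ContinuousLinearMap.coe_id, LinearMap.trace_id, finrank_euclideanSpace, smul_eq_mul,
    ContinuousLinearMap.coe_smulRight, LinearMap.trace_smulRight, ContinuousLinearMap.coe_coe]
  ring

theorem gradient_coord_div_norm_sq {x : EuclideanSpace ℝ ι} (hx : x ≠ 0) (i : ι) :
    gradient (fun z : EuclideanSpace ℝ ι => z i / ‖z‖ ^ 2) x =
      ‖x‖ ^ (-2 : ℝ) • EuclideanSpace.single i 1 - (2 * x i * ‖x‖ ^ (-4 : ℝ)) • x := by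
  have hφ : (fun z : EuclideanSpace ℝ ι => z i / ‖z‖ ^ 2) = fun z => z i * ‖z‖ ^ (-2 : ℝ) := by
    funext z
    rw [rpow_neg (norm_nonneg z), rpow_two, div_eq_mul_inv]
  have hD := (EuclideanSpace.proj (𝕜 := ℝ) i).hasFDerivAt.mul
    (hasFDerivAt_norm_rpow_of_ne_zero hx (-2))
  rw [hφ]
  refine (hasGradientAt_iff_hasFDerivAt.mpr (hD.congr_fderiv ?_)).gradient
  ext v
  simp only [add_apply, smul_apply, innerSL_apply_apply, PiLp.proj_apply, smul_eq_mul,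
    toDual_apply_apply, inner_sub_left, inner_smul_left, EuclideanSpace.inner_single_left]
  norm_num
  ring

theorem norm_rpow_smul_gradient_coord_div_norm_sq {y : EuclideanSpace ℝ ι} (hy : y ≠ 0) (a : ℝ)
    (i : ι) :
    ‖y‖ ^ a • gradient (fun z : EuclideanSpace ℝ ι => z i / ‖z‖ ^ 2) y =
      ‖y‖ ^ (a - 2) • EuclideanSpace.single i 1 - (2 * y i * ‖y‖ ^ (a - 4)) • y := by
  have hy' : 0 < ‖y‖ := norm_pos_iff.mpr hy
  rw [gradient_coord_div_norm_sq hy, smul_sub, smul_smul, smul_smul, sub_eq_add_neg a 2,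
    sub_eq_add_neg a 4, rpow_add hy', rpow_add hy']
  ring_nf

theorem divergence_norm_rpow_smul_gradient_coord_div_norm_sq {x : EuclideanSpace ℝ ι} (hx : x ≠ 0)
    (a : ℝ) (i : ι) :
    divergence (fun y => ‖y‖ ^ a • gradient (fun z : EuclideanSpace ℝ ι => z i / ‖z‖ ^ 2) y) x =
      (4 - a - 2 * Fintype.card ι) * x i * ‖x‖ ^ (a - 4) := by
  have hg := hasFDerivAt_norm_rpow_of_ne_zero hx (a - 2)
  have hh : HasFDerivAt (fun y : EuclideanSpace ℝ ι => 2 * y i * ‖y‖ ^ (a - 4)) _ x :=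
    ((EuclideanSpace.proj (𝕜 := ℝ) i).hasFDerivAt.const_mul 2).fun_mul
      (hasFDerivAt_norm_rpow_of_ne_zero hx (a - 4))
  have hfield : (fun y => ‖y‖ ^ a • gradient (fun z : EuclideanSpace ℝ ι => z i / ‖z‖ ^ 2) y)
      =ᶠ[nhds x] fun y =>
        ‖y‖ ^ (a - 2) • EuclideanSpace.single i 1 - (2 * y i * ‖y‖ ^ (a - 4)) • y := by
    filter_upwards [eventually_ne_nhds hx] with y hy
    exact norm_rpow_smul_gradient_coord_div_norm_sq hy a i
  have hhy : HasFDerivAt (fun y => (2 * y i * ‖y‖ ^ (a - 4)) • y) _ x :=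
    hh.fun_smul (hasFDerivAt_id x)
  rw [divergence_congr_of_eventuallyEq hfield, divergence_sub (hg.smul_const _).differentiableAt
    hhy.differentiableAt, hg.divergence_smul_const, hh.divergence_smul_id]
  simp only [add_apply, smul_apply, innerSL_apply_apply, PiLp.proj_apply, smul_eq_mul,
    EuclideanSpace.inner_single_right, real_inner_self_eq_norm_sq]
  have hx' : 0 < ‖x‖ := norm_pos_iff.mpr hx
  have hpow : ‖x‖ ^ (a - 4 - 2) * ‖x‖ ^ 2 = ‖x‖ ^ (a - 4) := by
    rw [← rpow_natCast, ← rpow_add hx']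
    norm_num
  rw [conj_trivial, mul_assoc _ _ (‖x‖ ^ 2), hpow, show a - 2 - 2 = a - 4 by ring]
  ring

end

/-- The inversion `φ(x) = x/‖x‖²` is `p(·)`-harmonic for the weight `‖x‖^{4−2n}`:
for each component `i`, the Euclidean divergence of `‖x‖^{4−2n} ∇φᵢ` vanishes on
`ℝⁿ \ {0}`. -/
theorem stmt_8 (n : ℕ) (x : EuclideanSpace ℝ (Fin n)) (hx : x ≠ 0) (i : Fin n) :
    ∑ j, fderiv ℝ
        (fun y : EuclideanSpace ℝ (Fin n) =>
          ‖y‖ ^ ((4 : ℝ) - 2 * n) • gradient (fun z : EuclideanSpace ℝ (Fin n) => z i / ‖z‖ ^ 2) y)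
        x (EuclideanSpace.single j 1) j = 0 := by
  have h := divergence_norm_rpow_smul_gradient_coord_div_norm_sq hx (4 - 2 * n) i
  rwa [Fintype.card_fin, show (4 : ℝ) - (4 - 2 * n) - 2 * n = 0 by ring, zero_mul, zero_mul] at h
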